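/- arXiv:0710.2405 — 4 statements merged into one kernel-verified Lean document; each statement's English description precedes it below -/
import Mathlib

section
/- Let f : ℝ → ℝ be measurable, vanishing outside [0,T], with ∫_0^T |f(t)| dt < ∞. For a positive integer m and c ∈ [0,T] set Δ = T/m and f_m(t,c) = f(⌊(t+c)/Δ⌋·Δ − c). Then there exists a sequence m_i → ∞ such that for Lebesgue-almost every c ∈ [0,T], lim_{i→∞} ∫_0^T |f(t) − f_{m_i}(t,c)| dt = 0. -/
/-!
Write `f_m(t,c) = f(t - Δ·fract((t+c)/Δ))`. For fixed `t` the map `c ↦ Δ·fract((t+c)/Δ)` is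
`Δ`-periodic and sweeps `(0,Δ]` once per period, so by Tonelli the mean over `c ∈ (0,T]` of
the `L¹` error equals `m·∫₀^Δ ‖f - f(· - s)‖₁ ds ≤ T·sup_{0<s≤Δ} ‖f - f(· - s)‖₁`, which tends
to `0` by continuity of translation in `L¹`. Thus the errors tend to `0` in `L¹(dc)`, hence in
measure, and a subsequence converges for almost every `c`.
-/

open MeasureTheory Filter Topology Set
open scoped ENNReal

namespace Function.Periodic

variable {h : ℝ → ℝ≥0∞} {Δ : ℝ}

theorem setLIntegral_Ioc_add_eq (hper : Periodic h Δ) (hΔ : 0 < Δ) (a b : ℝ) :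
    ∫⁻ x in Ioc a (a + Δ), h x = ∫⁻ x in Ioc b (b + Δ), h x := by
  have : VAddInvariantMeasure (AddSubgroup.zmultiples Δ) ℝ volume :=
    ⟨fun c s _ => measure_preimage_add _ _ _⟩
  exact (isAddFundamentalDomain_Ioc hΔ a).setLIntegral_eq (isAddFundamentalDomain_Ioc hΔ b) h
    hper.map_vadd_zmultiples

theorem setLIntegral_Ioc_add_nat_mul (hper : Periodic h Δ) (hΔ : 0 < Δ) (a : ℝ) (n : ℕ) :
    ∫⁻ x in Ioc a (a + n * Δ), h x = n * ∫⁻ x in Ioc a (a + Δ), h x := by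
  induction n with
  | zero => simp
  | succ n ih =>
    have hle : a ≤ a + n * Δ := le_add_of_nonneg_right (by positivity)
    rw [Nat.cast_succ, add_one_mul, ← add_assoc,
      ← Ioc_union_Ioc_eq_Ioc hle (le_add_of_nonneg_right hΔ.le),
      lintegral_union measurableSet_Ioc (Ioc_disjoint_Ioc_of_le le_rfl), ih,
      hper.setLIntegral_Ioc_add_eq hΔ (a + n * Δ) a]
    push_cast
    ring

end Function.Periodic

theorem setLIntegral_Ioc_comp_mul_fract {Δ : ℝ} (hΔ : 0 < Δ) (g : ℝ → ℝ≥0∞) (t : ℝ) (n : ℕ) :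
    ∫⁻ c in Ioc 0 (n * Δ), g (Δ * Int.fract ((t + c) / Δ)) = n * ∫⁻ s in Ioc 0 Δ, g s := by
  have hper : Function.Periodic (fun c => g (Δ * Int.fract ((t + c) / Δ))) Δ := fun c => by
    simp only [← add_assoc, add_div (t + c) Δ Δ, div_self hΔ.ne', Int.fract_add_one]
  have hshift : ∫⁻ c in Ioc (-t) (-t + Δ), g (Δ * Int.fract ((t + c) / Δ))
      = ∫⁻ s in Ioc 0 Δ, g (Δ * Int.fract (s / Δ)) := by
    have := (measurePreserving_add_left volume t).setLIntegral_comp_preimage_emb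
      (measurableEmbedding_addLeft t) (fun s => g (Δ * Int.fract (s / Δ))) (Ioc 0 Δ)
    rwa [preimage_const_add_Ioc, zero_sub, sub_eq_neg_add] at this
  have hfract : ∫⁻ s in Ioc 0 Δ, g (Δ * Int.fract (s / Δ)) = ∫⁻ s in Ioc 0 Δ, g s := by
    rw [Measure.restrict_congr_set Ioo_ae_eq_Ioc.symm]
    refine setLIntegral_congr_fun measurableSet_Ioo fun s hs => ?_
    rw [Int.fract_eq_self.2 ⟨div_nonneg hs.1.le hΔ.le, (div_lt_one hΔ).2 hs.2⟩,
      mul_div_cancel₀ _ hΔ.ne']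
  have hperiods := hper.setLIntegral_Ioc_add_nat_mul hΔ 0 n
  have hperiod := hper.setLIntegral_Ioc_add_eq hΔ 0 (-t)
  simp only [zero_add] at hperiods hperiod
  rw [hperiods, hperiod, hshift, hfract]

theorem setLIntegral_lintegral_comp_mul_fract {G : ℝ → ℝ → ℝ≥0∞}
    (hG : Measurable (Function.uncurry G)) {Δ : ℝ} (hΔ : 0 < Δ) (n : ℕ) :
    ∫⁻ c in Ioc 0 (n * Δ), ∫⁻ t, G t (Δ * Int.fract ((t + c) / Δ))
      = n * ∫⁻ s in Ioc 0 Δ, ∫⁻ t, G t s := by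
  have hmeas : Measurable fun p : ℝ × ℝ => G p.2 (Δ * Int.fract ((p.2 + p.1) / Δ)) :=
    hG.comp (measurable_snd.prodMk
      ((((measurable_snd.add measurable_fst).div_const Δ).fract).const_mul Δ))
  calc ∫⁻ c in Ioc 0 (n * Δ), ∫⁻ t, G t (Δ * Int.fract ((t + c) / Δ))
      = ∫⁻ t, ∫⁻ c in Ioc 0 (n * Δ), G t (Δ * Int.fract ((t + c) / Δ)) :=
        lintegral_lintegral_swap hmeas.aemeasurable
    _ = ∫⁻ t, n * ∫⁻ s in Ioc 0 Δ, G t s := by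
        simp_rw [setLIntegral_Ioc_comp_mul_fract hΔ]
    _ = n * ∫⁻ t, ∫⁻ s in Ioc 0 Δ, G t s := lintegral_const_mul _ hG.lintegral_prod_right'
    _ = n * ∫⁻ s in Ioc 0 Δ, ∫⁻ t, G t s := by rw [lintegral_lintegral_swap hG.aemeasurable]

theorem tendsto_lintegral_enorm_sub_comp_sub {E : Type*} [NormedAddCommGroup E] {f : ℝ → E}
    (hf : Integrable f) : Tendsto (fun s => ∫⁻ x, ‖f x - f (x - s)‖ₑ) (𝓝 0) (𝓝 0) := by
  let g : ℝ → C(ℝ, ℝ) := fun s => ⟨fun x => x - s, by fun_prop⟩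
  have hg : Continuous g :=
    ContinuousMap.continuous_of_continuous_uncurry _ (continuous_snd.sub continuous_fst)
  have hgm (s : ℝ) : MeasurePreserving (g s) := measurePreserving_sub_right volume s
  have hF := ((continuous_const (y := hf.toL1 f)).compMeasurePreservingLp hg hgm
    ENNReal.one_ne_top).tendsto 0
  rw [Lp.tendsto_Lp_iff_tendsto_eLpNorm'] at hF
  refine hF.congr fun s => ?_
  rw [eLpNorm_one_eq_lintegral_enorm]
  refine lintegral_congr_ae ?_
  filter_upwards [Lp.coeFn_sub (Lp.compMeasurePreserving (g s) (hgm s) (hf.toL1 f))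
      (Lp.compMeasurePreserving (g 0) (hgm 0) (hf.toL1 f)),
    Lp.coeFn_compMeasurePreserving (hf.toL1 f) (hgm s),
    Lp.coeFn_compMeasurePreserving (hf.toL1 f) (hgm 0),
    (hgm s).quasiMeasurePreserving.ae_eq_comp hf.coeFn_toL1,
    (hgm 0).quasiMeasurePreserving.ae_eq_comp hf.coeFn_toL1] with x h₁ h₂ h₃ h₄ h₅
  simp_all [g, enorm_sub_rev]

theorem tendsto_lintegral_lintegral_enorm_sub_comp_grid {E : Type*} [NormedAddCommGroup E]
    {f : ℝ → E} (hfm : StronglyMeasurable f) (hf : Integrable f) {T : ℝ} (hT : 0 < T) :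
    Tendsto (fun n : ℕ => ∫⁻ c in Ioc 0 T,
      ∫⁻ t, ‖f t - f (⌊(t + c) / (T / n)⌋ * (T / n) - c)‖ₑ) atTop (𝓝 0) := by
  have hG : Measurable (Function.uncurry fun t s => ‖f t - f (t - s)‖ₑ) :=
    ((hfm.comp_measurable measurable_fst).sub
      (hfm.comp_measurable (measurable_fst.sub measurable_snd))).enorm
  have hgrid (n : ℕ) (hn : n ≠ 0) : ∫⁻ c in Ioc 0 T,
      ∫⁻ t, ‖f t - f (⌊(t + c) / (T / n)⌋ * (T / n) - c)‖ₑ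
        = n * ∫⁻ s in Ioc 0 (T / n), ∫⁻ t, ‖f t - f (t - s)‖ₑ := by
    have hΔ : 0 < T / n := by positivity
    have hfloor (t c : ℝ) : ⌊(t + c) / (T / n)⌋ * (T / n) - c
        = t - T / n * Int.fract ((t + c) / (T / n)) := by
      rw [Int.fract, mul_sub, mul_div_cancel₀ _ hΔ.ne']
      ring
    simp_rw [hfloor]
    have := setLIntegral_lintegral_comp_mul_fract hG hΔ n
    rwa [mul_div_cancel₀ _ (Nat.cast_ne_zero.2 hn)] at this
  rw [ENNReal.tendsto_nhds_zero]
  intro ε hε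
  have hεT : 0 < ε / ENNReal.ofReal T := ENNReal.div_pos hε.ne' ENNReal.ofReal_ne_top
  obtain ⟨δ, hδ, hsmall⟩ := Metric.eventually_nhds_iff.1
    (ENNReal.tendsto_nhds_zero.1 (tendsto_lintegral_enorm_sub_comp_sub hf) _ hεT)
  filter_upwards [eventually_ne_atTop 0,
    (tendsto_const_div_atTop_nhds_zero_nat T).eventually (gt_mem_nhds hδ)] with n hn hnδ
  calc ∫⁻ c in Ioc 0 T, ∫⁻ t, ‖f t - f (⌊(t + c) / (T / n)⌋ * (T / n) - c)‖ₑ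
      = n * ∫⁻ s in Ioc 0 (T / n), ∫⁻ t, ‖f t - f (t - s)‖ₑ := hgrid n hn
    _ ≤ n * ∫⁻ _ in Ioc 0 (T / n), ε / ENNReal.ofReal T := by
        refine mul_le_mul_right (setLIntegral_mono measurable_const fun s hs => hsmall ?_) _
        rw [Real.dist_0_eq_abs, abs_of_pos hs.1]
        exact hs.2.trans_lt hnδ
    _ = ε := by
        rw [setLIntegral_const, Real.volume_Ioc, sub_zero, mul_left_comm, ← ENNReal.ofReal_natCast,
          ← ENNReal.ofReal_mul (Nat.cast_nonneg n), mul_div_cancel₀ _ (Nat.cast_ne_zero.2 hn),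
          ENNReal.div_mul_cancel (by simpa using hT) ENNReal.ofReal_ne_top]

theorem stronglyMeasurable_integral_abs_sub_comp_grid {f : ℝ → ℝ} (hf : Measurable f) (Δ : ℝ)
    (μ : Measure ℝ) [SFinite μ] :
    StronglyMeasurable fun c => ∫ t, |f t - f (⌊(t + c) / Δ⌋ * Δ - c)| ∂μ := by
  have hF : StronglyMeasurable fun p : ℝ × ℝ => |f p.2 - f (⌊(p.2 + p.1) / Δ⌋ * Δ - p.1)| :=
    ((hf.comp measurable_snd).sub (hf.comp
      (((measurable_from_top.comp ((measurable_snd.add measurable_fst).div_const _).floor).mul_const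
        _).sub measurable_fst))).abs.stronglyMeasurable
  exact hF.integral_prod_right'

/-- For an integrable `f` supported in `[0,T]`, there is a sequence of mesh numbers
`m i → ∞` such that for Lebesgue-almost every shift `c ∈ [0,T]` the piecewise-constant
discretizations `f_m(t,c) = f(⌊(t+c)/Δ⌋Δ - c)`, `Δ = T/m`, converge to `f` in
`L¹([0,T])`. -/
theorem stmt_1 (T : ℝ) (hT : 0 < T) (f : ℝ → ℝ) (hmeas : Measurable f)
    (hsupp : ∀ t, t ∉ Set.Icc 0 T → f t = 0)
    (hint : IntegrableOn f (Set.Icc 0 T)) :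
    ∃ m : ℕ → ℕ, Tendsto m atTop atTop ∧
      ∀ᵐ c ∂(volume.restrict (Set.Icc (0 : ℝ) T)),
        Tendsto (fun i => ∫ t in (0:ℝ)..T,
            |f t - f ((⌊(t + c) / (T / (m i : ℝ))⌋ : ℝ) * (T / (m i : ℝ)) - c)|)
          atTop (nhds 0) := by
  simp_rw [intervalIntegral.integral_of_le hT.le]
  set Φ : ℕ → ℝ → ℝ := fun n c => ∫ t in Ioc 0 T, |f t - f (⌊(t + c) / (T / n)⌋ * (T / n) - c)|
  have hΦ_le (n : ℕ) (c : ℝ) :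
      ‖Φ n c‖ₑ ≤ ∫⁻ t, ‖f t - f (⌊(t + c) / (T / n)⌋ * (T / n) - c)‖ₑ := by
    refine (enorm_integral_le_lintegral_enorm _).trans ?_
    simpa only [Real.enorm_abs] using setLIntegral_le_lintegral _ _
  have hΦ : Tendsto (fun n => eLpNorm (Φ n - 0) 1 (volume.restrict (Icc 0 T))) atTop (𝓝 0) := by
    refine tendsto_of_tendsto_of_tendsto_of_le_of_le tendsto_const_nhds
      (tendsto_lintegral_lintegral_enorm_sub_comp_grid hmeas.stronglyMeasurable
        (hint.integrable_of_forall_notMem_eq_zero hsupp) hT) (fun _ => zero_le) fun n => ?_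
    rw [sub_zero, eLpNorm_one_eq_lintegral_enorm, Measure.restrict_congr_set Ioc_ae_eq_Icc.symm]
    exact lintegral_mono (hΦ_le n)
  exact (tendstoInMeasure_of_tendsto_eLpNorm one_ne_zero
    (fun n => (stronglyMeasurable_integral_abs_sub_comp_grid hmeas _ _).aestronglyMeasurable)
    aestronglyMeasurable_const hΦ).exists_seq_tendsto_ae'
end

section
/- (Upper large deviations bound with errors.) Let H, η : ℝ^d → ℝ be uniformly bounded on compact sets, C > 0, and {Ξ_τ}_{τ≥1} a family of ℝ^d-valued random vectors with |Ξ_τ| ≤ C almost surely. For a > 0 and β₀ ∈ ℝ^d define L_a^{β₀}(α) = sup_{|β+β₀|≤a} (⟨β,α⟩ − H(β)) and η_a^{β₀} = sup_{|β+β₀|≤a} η(β). Then for every λ, a > 0 there exists τ₀ = τ₀(λ,a,C) such that: if for some τ ≥ τ₀ we have τ^{-1} log E e^{τ⟨β,Ξ_τ⟩} ≤ H(β) + η(β) for all β with |β+β₀| ≤ a, then for every compact K ⊆ ℝ^d, P{Ξ_τ ∈ K} ≤ exp( −τ ( inf_{α∈K} L_a^{β₀}(α) − η_a^{β₀} − λ|β₀|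 − λ ) ). -/
/-!
Fix `δ = λ / (4a + 1)` and cover the ball `‖α‖ ≤ C`, which carries the law of `Ξ_τ`, by
`N = N(λ, a, C)` balls of radius `δ / 2`. Each of them that meets `K` lies in a ball `B(α, δ)`
with `α ∈ K`, and `L(α) ≥ inf_K L` provides a slope `β` with `‖β + β₀‖ ≤ a` and
`⟪β, α⟫ - H β > inf_K L - λ/4`. The exponential Chebyshev inequality in the direction `β`, with the
moment bound, gives `P{Ξ_τ ∈ B(α, δ)} ≤ exp(-τ (inf_K L - η_a - λ‖β₀‖ - λ/2))`, since
`‖β‖ δ ≤ λ/4 + λ‖β₀‖`. Summing over the `N` balls costs a factor `N ≤ exp(τλ/2)` once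
`τ ≥ 2 log N / λ`.
-/

open MeasureTheory ProbabilityTheory Metric Real
open scoped RealInnerProductSpace

section Legendre

variable {E : Type*} [NormedAddCommGroup E] [InnerProductSpace ℝ E]

/-- The Legendre transform of `H` with slopes restricted to `B`; `L_a^{β₀} = legendreOn H B` for
`B = {β | ‖β + β₀‖ ≤ a}`. -/
noncomputable def legendreOn (H : E → ℝ) (B : Set E) (α : E) : ℝ :=
  sSup ((fun β => ⟪β, α⟫ - H β) '' B)

variable {H : E → ℝ} {B : Set E}

lemma bddAbove_inner_sub_image {c : ℝ} (hB : Bornology.IsBounded B) (hH : ∀ β ∈ B, -c ≤ H β)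
    (α : E) : BddAbove ((fun β => ⟪β, α⟫ - H β) '' B) := by
  obtain ⟨R, hR⟩ := hB.subset_closedBall 0
  refine ⟨R * ‖α‖ + c, ?_⟩
  rintro _ ⟨β, hβ, rfl⟩
  have hβR : ‖β‖ ≤ R := by simpa using hR hβ
  have := real_inner_le_norm β α
  have := mul_le_mul_of_nonneg_right hβR (norm_nonneg α)
  linarith [hH β hβ]

lemma inner_sub_le_legendreOn {α β : E} (hbdd : BddAbove ((fun β => ⟪β, α⟫ - H β) '' B))
    (hβ : β ∈ B) : ⟪β, α⟫ - H β ≤ legendreOn H B α :=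
  le_csSup hbdd (Set.mem_image_of_mem _ hβ)

lemma bddBelow_legendreOn_image {K : Set E} {β : E} (hK : IsCompact K)
    (hbdd : ∀ α, BddAbove ((fun β => ⟪β, α⟫ - H β) '' B)) (hβ : β ∈ B) :
    BddBelow (legendreOn H B '' K) := by
  obtain ⟨c, hc⟩ := hK.bddBelow_image (f := fun α => ⟪β, α⟫)
    (continuous_const.inner continuous_id).continuousOn
  refine ⟨c - H β, ?_⟩
  rintro _ ⟨α, hα, rfl⟩
  have := hc (Set.mem_image_of_mem _ hα)
  have := inner_sub_le_legendreOn (hbdd α) hβ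
  linarith

end Legendre

lemma norm_mul_div_le_of_norm_add_le {E : Type*} [SeminormedAddCommGroup E] {β β₀ : E}
    {a lam : ℝ} (ha : 0 ≤ a) (hlam : 0 ≤ lam) (hβ : ‖β + β₀‖ ≤ a) :
    ‖β‖ * (lam / (4 * a + 1)) ≤ lam / 4 + lam * ‖β₀‖ := by
  have hβ' : ‖β‖ ≤ a + ‖β₀‖ := by
    simpa using (norm_sub_le (β + β₀) β₀).trans (add_le_add_left hβ _)
  rw [mul_div_assoc', div_le_iff₀ (by positivity)]
  nlinarith [mul_le_mul_of_nonneg_right hβ' hlam,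
    mul_nonneg (mul_nonneg hlam (norm_nonneg β₀)) ha]

lemma le_exp_mul_of_inv_mul_log_le {x τ c : ℝ} (hτ : 0 < τ) (h : τ⁻¹ * log x ≤ c) :
    x ≤ exp (τ * c) :=
  (le_exp_log x).trans (exp_le_exp.2 (by rwa [inv_mul_le_iff₀ hτ] at h))

section Chebyshev

variable {Ω E : Type*} [MeasurableSpace Ω] {P : Measure Ω} [IsFiniteMeasure P]
  [NormedAddCommGroup E] [InnerProductSpace ℝ E] {X : Ω → E}

lemma integrable_exp_mul_inner_of_norm_le [MeasurableSpace E] [OpensMeasurableSpace E] {C τ : ℝ}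
    (hX : Measurable X) (hC : ∀ᵐ ω ∂P, ‖X ω‖ ≤ C) (β : E) (hτ : 0 ≤ τ) :
    Integrable (fun ω => exp (τ * ⟪β, X ω⟫)) P := by
  refine integrable_exp_mul_of_le τ (‖β‖ * C) hτ
    ((continuous_const.inner continuous_id).measurable.comp hX).aemeasurable ?_
  filter_upwards [hC] with ω hω
  exact (real_inner_le_norm _ _).trans (mul_le_mul_of_nonneg_left hω (norm_nonneg β))

lemma measureReal_ball_le_exp_mul_mgf (β α : E) {δ τ : ℝ} (hτ : 0 ≤ τ)
    (hint : Integrable (fun ω => exp (τ * ⟪β, X ω⟫)) P) :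
    P.real (X ⁻¹' ball α δ) ≤ exp (-τ * (⟪β, α⟫ - ‖β‖ * δ)) * mgf (fun ω => ⟪β, X ω⟫) P τ := by
  refine (measureReal_mono fun ω hω => ?_).trans (measure_ge_le_exp_mul_mgf _ hτ hint)
  have hdist : ‖α - X ω‖ < δ := by rw [← dist_eq_norm, dist_comm]; exact hω
  have h1 : ⟪β, α - X ω⟫ ≤ ‖β‖ * ‖α - X ω‖ := real_inner_le_norm _ _
  have h2 := mul_le_mul_of_nonneg_left hdist.le (norm_nonneg β)
  rw [inner_sub_right] at h1
  show ⟪β, α⟫ - ‖β‖ * δ ≤ ⟪β, X ω⟫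
  linarith

lemma measureReal_ball_le_exp_of_lt_legendreOn {H η : E → ℝ} {B : Set E} {α : E}
    {τ δ ℓ e κ : ℝ} (hτ : 0 ≤ τ) (hB : B.Nonempty)
    (hint : ∀ β ∈ B, Integrable (fun ω => exp (τ * ⟪β, X ω⟫)) P)
    (hmgf : ∀ β ∈ B, mgf (fun ω => ⟪β, X ω⟫) P τ ≤ exp (τ * (H β + η β)))
    (hη : ∀ β ∈ B, η β ≤ e) (hκ : ∀ β ∈ B, ‖β‖ * δ ≤ κ) (hℓ : ℓ < legendreOn H B α) :
    P.real (X ⁻¹' ball α δ) ≤ exp (-τ * (ℓ - e - κ)) := by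
  obtain ⟨_, ⟨β, hβ, rfl⟩, hℓβ⟩ := exists_lt_of_lt_csSup (hB.image _) hℓ
  have hexponent : τ * (ℓ - e - κ) ≤ τ * (⟪β, α⟫ - H β - η β - ‖β‖ * δ) :=
    mul_le_mul_of_nonneg_left (by linarith [hη β hβ, hκ β hβ]) hτ
  calc P.real (X ⁻¹' ball α δ)
      ≤ exp (-τ * (⟪β, α⟫ - ‖β‖ * δ)) * mgf (fun ω => ⟪β, X ω⟫) P τ :=
        measureReal_ball_le_exp_mul_mgf β α hτ (hint β hβ)
    _ ≤ exp (-τ * (⟪β, α⟫ - ‖β‖ * δ)) * exp (τ * (H β + η β)) := by gcongr; exact hmgf β hβ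
    _ = exp (-τ * (⟪β, α⟫ - H β - η β - ‖β‖ * δ)) := by rw [← exp_add]; ring_nf
    _ ≤ exp (-τ * (ℓ - e - κ)) := exp_le_exp.2 (by linarith)

end Chebyshev

lemma measureReal_preimage_le_card_mul {Ω X : Type*} [MeasurableSpace Ω] [PseudoMetricSpace X]
    {μ : Measure Ω} [IsFiniteMeasure μ] {Y : Ω → X} {S K : Set X} {t : Finset X} {r b : ℝ}
    (hY : ∀ᵐ ω ∂μ, Y ω ∈ S) (ht : S ⊆ ⋃ v ∈ t, ball v (r / 2)) (hb : 0 ≤ b)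
    (hK : ∀ α ∈ K, μ.real (Y ⁻¹' ball α r) ≤ b) :
    μ.real (Y ⁻¹' K) ≤ t.card * b := by
  have hcover : Y ⁻¹' K ≤ᵐ[μ] ⋃ v ∈ t, Y ⁻¹' (K ∩ ball v (r / 2)) := by
    filter_upwards [hY] with ω hωS hωK
    obtain ⟨v, hv, hωv⟩ := Set.mem_iUnion₂.1 (ht hωS)
    exact Set.mem_biUnion hv ⟨hωK, hωv⟩
  have hpiece : ∀ v ∈ t, μ.real (Y ⁻¹' (K ∩ ball v (r / 2))) ≤ b := by
    intro v _
    rcases (K ∩ ball v (r / 2)).eq_empty_or_nonempty with hempty | ⟨α, hαK, hαv⟩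
    · simpa [hempty] using hb
    refine (measureReal_mono (Set.preimage_mono fun x hx => ?_)).trans (hK α hαK)
    calc dist x α ≤ dist x v + dist α v := dist_triangle_right _ _ _
      _ < r / 2 + r / 2 := add_lt_add hx.2 hαv
      _ = r := add_halves r
  calc μ.real (Y ⁻¹' K)
      ≤ μ.real (⋃ v ∈ t, Y ⁻¹' (K ∩ ball v (r / 2))) :=
        ENNReal.toReal_mono (measure_ne_top _ _) (measure_mono_ae hcover)
    _ ≤ ∑ v ∈ t, μ.real (Y ⁻¹' (K ∩ ball v (r / 2))) := measureReal_biUnion_finset_le _ _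
    _ ≤ t.card * b := by simpa using Finset.sum_le_card_nsmul _ _ _ hpiece

lemma measureReal_preimage_le_card_mul_exp {Ω E : Type*} [MeasurableSpace Ω] {P : Measure Ω}
    [IsFiniteMeasure P] [NormedAddCommGroup E] [InnerProductSpace ℝ E] {X : Ω → E}
    {H η : E → ℝ} {S B K : Set E} {t : Finset E} {τ δ ε e κ : ℝ} (hτ : 0 ≤ τ)
    (hX : ∀ᵐ ω ∂P, X ω ∈ S) (ht : S ⊆ ⋃ v ∈ t, ball v (δ / 2)) (hB : B.Nonempty)
    (hint : ∀ β ∈ B, Integrable (fun ω => exp (τ * ⟪β, X ω⟫)) P)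
    (hmgf : ∀ β ∈ B, mgf (fun ω => ⟪β, X ω⟫) P τ ≤ exp (τ * (H β + η β)))
    (hη : ∀ β ∈ B, η β ≤ e) (hκ : ∀ β ∈ B, ‖β‖ * δ ≤ κ) (hK : BddBelow (legendreOn H B '' K))
    (hε : 0 < ε) :
    P.real (X ⁻¹' K) ≤ t.card * exp (-τ * (sInf (legendreOn H B '' K) - ε - e - κ)) :=
  measureReal_preimage_le_card_mul hX ht (exp_pos _).le fun _ hα =>
    measureReal_ball_le_exp_of_lt_legendreOn hτ hB hint hmgf hη hκ
      ((sub_lt_self _ hε).trans_le (csInf_le hK (Set.mem_image_of_mem _ hα)))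

theorem stmt_8_general {d : ℕ} {Ω : Type*} [MeasurableSpace Ω] (P : Measure Ω)
    [IsProbabilityMeasure P]
    (H η : EuclideanSpace ℝ (Fin d) → ℝ)
    (hbd : ∀ s : Set (EuclideanSpace ℝ (Fin d)), IsCompact s →
      ∃ Cs : ℝ, ∀ β ∈ s, |H β| ≤ Cs ∧ |η β| ≤ Cs)
    (C : ℝ) (Ξ : ℝ → Ω → EuclideanSpace ℝ (Fin d))
    (hmeas : ∀ τ : ℝ, 1 ≤ τ → Measurable (Ξ τ))
    (hbdd : ∀ τ : ℝ, 1 ≤ τ → ∀ᵐ ω ∂P, ‖Ξ τ ω‖ ≤ C) :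
    ∀ lam a : ℝ, 0 < lam → 0 < a → ∃ τ₀ : ℝ, ∀ τ : ℝ, 1 ≤ τ → τ₀ ≤ τ →
      ∀ β₀ : EuclideanSpace ℝ (Fin d),
        (∀ β : EuclideanSpace ℝ (Fin d), ‖β + β₀‖ ≤ a →
            τ⁻¹ * Real.log (∫ ω, Real.exp (τ * ⟪β, Ξ τ ω⟫) ∂P) ≤ H β + η β) →
        ∀ K : Set (EuclideanSpace ℝ (Fin d)), IsCompact K →
          (P {ω | Ξ τ ω ∈ K}).toReal ≤
            Real.exp (-τ *
              (sInf ((fun α => sSup ((fun β => ⟪β, α⟫ - H β) '' {β | ‖β + β₀‖ ≤ a})) '' K)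
                - sSup (η '' {β | ‖β + β₀‖ ≤ a}) - lam * ‖β₀‖ - lam)) := by
  intro lam a hlam ha
  obtain ⟨t, -, htfin, htcov⟩ := (isCompact_closedBall (0 : EuclideanSpace ℝ (Fin d)) C)
    |>.finite_cover_balls (half_pos (by positivity : 0 < lam / (4 * a + 1)))
  refine ⟨2 / lam * log htfin.toFinset.card, fun τ hτ1 hτ₀ β₀ hmom K hK => ?_⟩
  have hτ : 0 < τ := one_pos.trans_le hτ1
  set B := {β : EuclideanSpace ℝ (Fin d) | ‖β + β₀‖ ≤ a}
  have hB : B = closedBall (-β₀) a := by ext; simp [B, dist_eq_norm]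
  have hβ₀B : -β₀ ∈ B := by simp [B, ha.le]
  obtain ⟨CH, hCH⟩ := hbd B (hB ▸ isCompact_closedBall _ _)
  have hLbdd := bddAbove_inner_sub_image (hB ▸ isBounded_closedBall)
    fun β hβ => neg_le_of_abs_le (hCH β hβ).1
  have hηbdd : BddAbove (η '' B) :=
    ⟨CH, by rintro _ ⟨β, hβ, rfl⟩; exact le_of_abs_le (hCH β hβ).2⟩
  have hcard : (htfin.toFinset.card : ℝ) ≤ exp (τ * (lam / 2)) := by
    refine (le_exp_log _).trans (exp_le_exp.2 ?_)
    rw [div_mul_eq_mul_div, div_le_iff₀ hlam] at hτ₀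
    linarith
  change P.real (Ξ τ ⁻¹' K) ≤
    exp (-τ * (sInf (legendreOn H B '' K) - sSup (η '' B) - lam * ‖β₀‖ - lam))
  calc P.real (Ξ τ ⁻¹' K)
      ≤ htfin.toFinset.card * exp (-τ * (sInf (legendreOn H B '' K) - lam / 4 - sSup (η '' B)
          - (lam / 4 + lam * ‖β₀‖))) :=
        measureReal_preimage_le_card_mul_exp (S := closedBall 0 C) hτ.le
          (by simpa using hbdd τ hτ1) (by simpa using htcov) ⟨_, hβ₀B⟩
          (fun β _ => integrable_exp_mul_inner_of_norm_le (hmeas τ hτ1) (hbdd τ hτ1) β hτ.le)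
          (fun β hβ => le_exp_mul_of_inv_mul_log_le hτ (hmom β hβ))
          (fun β hβ => le_csSup hηbdd (Set.mem_image_of_mem _ hβ))
          (fun β hβ => norm_mul_div_le_of_norm_add_le ha.le hlam.le hβ)
          (bddBelow_legendreOn_image hK hLbdd hβ₀B) (by positivity)
    _ ≤ exp (τ * (lam / 2)) * exp (-τ * (sInf (legendreOn H B '' K) - lam / 4 - sSup (η '' B)
          - (lam / 4 + lam * ‖β₀‖))) := by gcongr
    _ = _ := by rw [← exp_add]; ring_nf

/-- Upper large deviations bound with errors (Lemma on general LD bounds):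
if the exponential moments of the bounded random vectors `Ξ_τ` are bounded above by
`H + η` on the ball `{‖β + β₀‖ ≤ a}`, then for `τ` large enough (depending only on
`λ, a, C`) and every compact `K`,
`P{Ξ_τ ∈ K} ≤ exp(-τ(inf_K L_a^{β₀} - η_a^{β₀} - λ‖β₀‖ - λ))`, where
`L_a^{β₀}(α) = sup_{‖β+β₀‖≤a} (⟨β,α⟩ - H(β))` and `η_a^{β₀} = sup_{‖β+β₀‖≤a} η(β)`. -/
theorem stmt_8 {d : ℕ} {Ω : Type*} [MeasurableSpace Ω] (P : Measure Ω)
    [IsProbabilityMeasure P]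
    (H η : EuclideanSpace ℝ (Fin d) → ℝ)
    (hbd : ∀ s : Set (EuclideanSpace ℝ (Fin d)), IsCompact s →
      ∃ Cs : ℝ, ∀ β ∈ s, |H β| ≤ Cs ∧ |η β| ≤ Cs)
    (C : ℝ) (hC : 0 < C) (Ξ : ℝ → Ω → EuclideanSpace ℝ (Fin d))
    (hmeas : ∀ τ : ℝ, 1 ≤ τ → Measurable (Ξ τ))
    (hbdd : ∀ τ : ℝ, 1 ≤ τ → ∀ᵐ ω ∂P, ‖Ξ τ ω‖ ≤ C) :
    ∀ lam a : ℝ, 0 < lam → 0 < a → ∃ τ₀ : ℝ, ∀ τ : ℝ, 1 ≤ τ → τ₀ ≤ τ →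
      ∀ β₀ : EuclideanSpace ℝ (Fin d),
        (∀ β : EuclideanSpace ℝ (Fin d), ‖β + β₀‖ ≤ a →
            τ⁻¹ * Real.log (∫ ω, Real.exp (τ * ⟪β, Ξ τ ω⟫) ∂P) ≤ H β + η β) →
        ∀ K : Set (EuclideanSpace ℝ (Fin d)), IsCompact K →
          (P {ω | Ξ τ ω ∈ K}).toReal ≤
            Real.exp (-τ *
              (sInf ((fun α => sSup ((fun β => ⟪β, α⟫ - H β) '' {β | ‖β + β₀‖ ≤ a})) '' K)
                - sSup (η '' {β | ‖β + β₀‖ ≤ a}) - lam * ‖β₀‖ - lam)) :=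
  stmt_8_general P H η hbd C Ξ hmeas hbdd
end

section
/- (Linear growth of cost away from the ω-limit set.) Let Π^t be a continuous flow on ℝ^d depending continuously on initial conditions, and G ⊆ X a compact set that does not entirely contain any forward semi-orbit of Π^t, i.e., for every x ∈ G there is t ≥ 0 with Π^t x ∉ G. Let S_{0t} be lower semicontinuous, concatenation-subadditive path functionals with the property that S_{0T}(γ) = 0 if and only if γ is an orbit segment of Π^t. Then there exist a > 0 and T > 0 such that for every t ≥ 0 and every γ ∈ C([0,t], ℝ^d) with γ_s ∈ G for all s ∈ [0,t], one has S_{0t}(γ) ≥ a ⌊t/T⌋. -/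
/-!
Compactness turns the pointwise escape hypothesis into a uniform escape time `T`: every point of
`G` leaves `G` within time `T`. A zero-cost `K`-Lipschitz path of length `T` inside `G` would be
an orbit segment that stays in `G` for time `T`, so the cost is positive on the set of such paths.
By Arzelà–Ascoli this set is compact for uniform convergence, and the cost is lower
semicontinuous, so the cost is bounded below by some `a > 0` there. Cutting a path of length `t`
into `⌊t/T⌋` pieces of length `T` and using additivity gives the bound.
-/

open scoped ENNReal NNReal
open Set Filter Topology

theorem IsCompact.exists_uniform_escape_time {X : Type*} [TopologicalSpace X]
    {Φ : ℝ → X → X} (hΦ : ∀ t, Continuous (Φ t)) {G : Set X} (hGc : IsCompact G)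
    (hGcl : IsClosed G) (hesc : ∀ x ∈ G, ∃ t, 0 ≤ t ∧ Φ t x ∉ G) :
    ∃ T, 0 < T ∧ ∀ x ∈ G, ∃ s ∈ Icc 0 T, Φ s x ∉ G := by
  set U : ℝ → Set X := fun T => ⋃ s ∈ Icc 0 T, Φ s ⁻¹' Gᶜ
  have hU_mono : Monotone U := fun T T' h =>
    biUnion_subset_biUnion_left (Icc_subset_Icc_right h)
  have hU_open : ∀ T, IsOpen (U T) := fun T =>
    isOpen_biUnion fun s _ => hGcl.isOpen_compl.preimage (hΦ s)
  have hG_cover : G ⊆ ⋃ T, U T := fun x hx => by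
    obtain ⟨t, ht, hxt⟩ := hesc x hx
    exact mem_iUnion.2 ⟨t, mem_biUnion ⟨ht, le_rfl⟩ hxt⟩
  obtain ⟨T, hT⟩ := hGc.elim_directed_cover U hU_open hG_cover hU_mono.directed_le
  refine ⟨max T 1, by positivity, fun x hx => ?_⟩
  simpa [U] using hU_mono (le_max_left T 1) (hT hx)

theorem isCompact_setOf_lipschitzWith_mem {X E : Type*} [PseudoMetricSpace X] [CompactSpace X]
    [MetricSpace E] (K : ℝ≥0) {G : Set E} (hG : IsCompact G) :
    IsCompact {f : C(X, E) | LipschitzWith K f ∧ ∀ x, f x ∈ G} := by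
  refine ArzelaAscoli.isCompact_of_equicontinuous _ ?_
    (LipschitzWith.uniformEquicontinuous _ K fun f => f.2.1).equicontinuous
  have himage : ContinuousMap.toFun '' {f : C(X, E) | LipschitzWith K f ∧ ∀ x, f x ∈ G} =
      {g : X → E | LipschitzWith K g} ∩ univ.pi fun _ => G := by
    ext g
    simp only [mem_image, mem_ofPred_eq, mem_inter_iff, mem_univ_pi]
    constructor
    · rintro ⟨f, hf, rfl⟩
      exact hf
    · intro hg
      exact ⟨⟨g, hg.1.continuous⟩, hg, rfl⟩
  rw [himage]
  exact (isCompact_univ_pi fun _ => hG).of_isClosed_subset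
    ((isClosed_setOfPred_lipschitzWith K).inter (isClosed_set_pi fun _ _ => hG.isClosed))
    inter_subset_right

theorem IsSeqCompact.exists_pos_ofReal_le {α : Type*} [TopologicalSpace α]
    {A : Set α} (hA : IsSeqCompact A) {F : α → ℝ≥0∞}
    (hF : ∀ u : ℕ → α, ∀ x, Tendsto u atTop (𝓝 x) → F x ≤ liminf (fun n => F (u n)) atTop)
    (hpos : ∀ x ∈ A, F x ≠ 0) :
    ∃ a : ℝ, 0 < a ∧ ∀ x ∈ A, ENNReal.ofReal a ≤ F x := by
  by_contra! h
  choose u huA hu using fun n : ℕ => h (1 / (n + 1)) Nat.one_div_pos_of_nat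
  obtain ⟨x, hxA, φ, hφ, hux⟩ := hA huA
  have hFu : Tendsto (fun n => F (u n)) atTop (𝓝 0) := by
    refine tendsto_of_tendsto_of_tendsto_of_le_of_le tendsto_const_nhds ?_
      (fun _ => zero_le) (fun n => (hu n).le)
    simpa using ENNReal.tendsto_ofReal tendsto_one_div_add_atTop_nhds_zero_nat
  have hFx : F x ≤ 0 := (hF _ x hux).trans_eq (hFu.comp hφ.tendsto_atTop).liminf_eq
  exact hpos x hxA (nonpos_iff_eq_zero.1 hFx)

theorem eq_of_eqOn_of_le_liminf {α β : Type*} [UniformSpace β] {s : Set α}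
    {C : (α → β) → ℝ≥0∞}
    (hC : ∀ (γn : ℕ → α → β) (γ : α → β), TendstoUniformlyOn γn γ atTop s →
      C γ ≤ liminf (fun n => C (γn n)) atTop)
    {γ γ' : α → β} (h : EqOn γ γ' s) : C γ = C γ' := by
  have hle : ∀ γ γ' : α → β, EqOn γ γ' s → C γ ≤ C γ' := fun γ γ' h => by
    have hconst : TendstoUniformlyOn (fun _ : ℕ => γ') γ atTop s := fun u hu =>
      Eventually.of_forall fun _ x hx => by rw [h hx]; exact refl_mem_uniformity hu
    simpa using hC _ γ hconst
  exact (hle γ γ' h).antisymm (hle γ' γ h.symm)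

section Paths

variable {E : Type*} [MetricSpace E]

theorem mapsTo_const_add_Icc {T t : ℝ} (hT : 0 ≤ T) :
    MapsTo (T + ·) (Icc 0 (t - T)) (Icc 0 t) :=
  fun _ hu => ⟨by linarith [hu.1], by linarith [hu.2]⟩

theorem LipschitzOnWith.comp_const_add_Icc {K : ℝ≥0} {γ : ℝ → E} {t T : ℝ}
    (hγ : LipschitzOnWith K γ (Icc 0 t)) (hT : 0 ≤ T) :
    LipschitzOnWith K (fun u => γ (T + u)) (Icc 0 (t - T)) := by
  simpa [Function.comp_def] using hγ.comp (isometry_add_left T).lipschitz.lipschitzOnWith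
    (mapsTo_const_add_Icc hT)

theorem exists_pos_ofReal_le_of_lipschitzOnWith {T : ℝ} (hT : 0 ≤ T) (K : ℝ≥0) {G : Set E}
    (hG : IsCompact G) {C : (ℝ → E) → ℝ≥0∞}
    (hC : ∀ (γn : ℕ → ℝ → E) (γ : ℝ → E), TendstoUniformlyOn γn γ atTop (Icc 0 T) →
      C γ ≤ liminf (fun n => C (γn n)) atTop)
    (hpos : ∀ γ, LipschitzOnWith K γ (Icc 0 T) → MapsTo γ (Icc 0 T) G → C γ ≠ 0) :
    ∃ a : ℝ, 0 < a ∧ ∀ γ, LipschitzOnWith K γ (Icc 0 T) → MapsTo γ (Icc 0 T) G →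
      ENNReal.ofReal a ≤ C γ := by
  have hF_lsc : ∀ (u : ℕ → C(Icc 0 T, E)) f, Tendsto u atTop (𝓝 f) →
      C (IccExtend hT f) ≤ liminf (fun n => C (IccExtend hT (u n))) atTop := by
    intro u f hu
    refine hC _ _ (tendstoUniformlyOn_iff_restrict.2 ?_)
    have hres : ∀ g : C(Icc 0 T, E), (Icc 0 T).domRestrict (IccExtend hT g) = g :=
      fun g => funext (IccExtend_val hT g)
    simpa only [hres] using ContinuousMap.tendsto_iff_tendstoUniformly.1 hu
  have hF_pos : ∀ f ∈ {f : C(Icc 0 T, E) | LipschitzWith K f ∧ ∀ x, f x ∈ G},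
      C (IccExtend hT f) ≠ 0 := by
    intro f hf
    refine hpos _ (fun x hx y hy => ?_) (fun x hx => ?_)
    · simpa [IccExtend_of_mem _ _ hx, IccExtend_of_mem _ _ hy] using hf.1 ⟨x, hx⟩ ⟨y, hy⟩
    · simpa [IccExtend_of_mem _ _ hx] using hf.2 ⟨x, hx⟩
  obtain ⟨a, ha, hF⟩ :=
    (isCompact_setOf_lipschitzWith_mem K hG).isSeqCompact.exists_pos_ofReal_le hF_lsc hF_pos
  refine ⟨a, ha, fun γ hγ hγG => ?_⟩
  have hrestrict := hF ⟨_, hγ.to_restrict.continuous⟩ ⟨hγ.to_restrict, fun x => hγG x.2⟩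
  rwa [eq_of_eqOn_of_le_liminf hC fun s hs => IccExtend_of_mem _ _ hs] at hrestrict

theorem mul_nat_le_of_forall_le {S : ℝ → (ℝ → E) → ℝ≥0∞}
    (hadd : ∀ (γ : ℝ → E) (t s : ℝ), 0 ≤ t → 0 ≤ s →
      S (t + s) γ = S t γ + S s (fun u => γ (t + u)))
    {K : ℝ≥0} {G : Set E} {T : ℝ} (hT : 0 ≤ T) {c : ℝ≥0∞}
    (hc : ∀ γ, LipschitzOnWith K γ (Icc 0 T) → MapsTo γ (Icc 0 T) G → c ≤ S T γ)
    (n : ℕ) {t : ℝ} (ht : n * T ≤ t) {γ : ℝ → E} (hγ : LipschitzOnWith K γ (Icc 0 t))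
    (hγG : MapsTo γ (Icc 0 t) G) : c * n ≤ S t γ := by
  induction n generalizing t γ with
  | zero => simp
  | succ n ih =>
    push_cast at ht
    have hTt : T ≤ t := by nlinarith [n.cast_nonneg (α := ℝ)]
    have hsplit : S t γ = S T γ + S (t - T) (fun u => γ (T + u)) := by
      simpa using hadd γ T (t - T) hT (by linarith)
    have hhead : c ≤ S T γ :=
      hc γ (hγ.mono (Icc_subset_Icc_right hTt)) (hγG.mono_left (Icc_subset_Icc_right hTt))
    have htail : c * n ≤ S (t - T) (fun u => γ (T + u)) :=
      ih (by linarith) (hγ.comp_const_add_Icc hT) (hγG.comp (mapsTo_const_add_Icc hT))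
    calc c * (n + 1 : ℕ) = c + c * n := by push_cast; ring
      _ ≤ S T γ + S (t - T) (fun u => γ (T + u)) := add_le_add hhead htail
      _ = S t γ := hsplit.symm

end Paths

theorem stmt_14_general {d : ℕ} (K : ℝ≥0)
    (Φ : ℝ → EuclideanSpace ℝ (Fin d) → EuclideanSpace ℝ (Fin d))
    (hΦc : Continuous fun p : ℝ × EuclideanSpace ℝ (Fin d) => Φ p.1 p.2)
    (G : Set (EuclideanSpace ℝ (Fin d))) (hGc : IsCompact G)
    (hesc : ∀ x ∈ G, ∃ t : ℝ, 0 ≤ t ∧ Φ t x ∉ G)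
    (S : ℝ → (ℝ → EuclideanSpace ℝ (Fin d)) → ℝ≥0∞)
    (hadd : ∀ (γ : ℝ → EuclideanSpace ℝ (Fin d)) (t s : ℝ), 0 ≤ t → 0 ≤ s →
      S (t + s) γ = S t γ + S s (fun u => γ (t + u)))
    (hlsc : ∀ T : ℝ, 0 ≤ T → ∀ (γn : ℕ → ℝ → EuclideanSpace ℝ (Fin d))
      (γ : ℝ → EuclideanSpace ℝ (Fin d)),
      TendstoUniformlyOn γn γ Filter.atTop (Set.Icc 0 T) →
      S T γ ≤ Filter.liminf (fun n => S T (γn n)) Filter.atTop)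
    (hzero : ∀ T : ℝ, 0 ≤ T → ∀ γ : ℝ → EuclideanSpace ℝ (Fin d),
      LipschitzOnWith K γ (Set.Icc 0 T) →
      (S T γ = 0 ↔ ∀ s ∈ Set.Icc (0:ℝ) T, γ s = Φ s (γ 0))) :
    ∃ a T : ℝ, 0 < a ∧ 0 < T ∧ ∀ t : ℝ, 0 ≤ t →
      ∀ γ : ℝ → EuclideanSpace ℝ (Fin d), LipschitzOnWith K γ (Set.Icc 0 t) →
        (∀ s ∈ Set.Icc (0:ℝ) t, γ s ∈ G) →
        ENNReal.ofReal a * (⌊t / T⌋₊ : ℝ≥0∞) ≤ S t γ := by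
  obtain ⟨T, hT, hTesc⟩ :=
    hGc.exists_uniform_escape_time (fun t => hΦc.uncurry_left t) hGc.isClosed hesc
  have hpos : ∀ γ, LipschitzOnWith K γ (Icc 0 T) → MapsTo γ (Icc 0 T) G → S T γ ≠ 0 := by
    intro γ hγ hγG hS
    obtain ⟨s, hs, hout⟩ := hTesc (γ 0) (hγG ⟨le_rfl, hT.le⟩)
    exact hout ((hzero T hT.le γ hγ).1 hS s hs ▸ hγG hs)
  obtain ⟨a, ha, hbound⟩ :=
    exists_pos_ofReal_le_of_lipschitzOnWith hT.le K hGc (hlsc T hT.le) hpos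
  refine ⟨a, T, ha, hT, fun t ht γ hγ hγG => ?_⟩
  exact mul_nat_le_of_forall_le hadd hT.le hbound _
    ((le_div_iff₀ hT).1 (Nat.floor_le (div_nonneg ht hT.le))) hγ hγG

/-- Linear growth of the cost away from the ω-limit set: if no forward semi-orbit of
the continuous flow `Φ` stays forever in the compact set `G`, and the path functionals
`S` are additive in time, lower semicontinuous under uniform convergence, and vanish
exactly on orbit segments, then there are `a, T > 0` such that every `K`-Lipschitz path
staying in `G` on `[0,t]` has cost at least `a⌊t/T⌋`. -/
theorem stmt_14 {d : ℕ} (K : ℝ≥0)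
    (Φ : ℝ → EuclideanSpace ℝ (Fin d) → EuclideanSpace ℝ (Fin d))
    (hΦc : Continuous fun p : ℝ × EuclideanSpace ℝ (Fin d) => Φ p.1 p.2)
    (hΦ0 : ∀ x, Φ 0 x = x)
    (hΦgrp : ∀ t s x, Φ (t + s) x = Φ t (Φ s x))
    (G : Set (EuclideanSpace ℝ (Fin d))) (hGc : IsCompact G)
    (hesc : ∀ x ∈ G, ∃ t : ℝ, 0 ≤ t ∧ Φ t x ∉ G)
    (S : ℝ → (ℝ → EuclideanSpace ℝ (Fin d)) → ℝ≥0∞)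
    (hadd : ∀ (γ : ℝ → EuclideanSpace ℝ (Fin d)) (t s : ℝ), 0 ≤ t → 0 ≤ s →
      S (t + s) γ = S t γ + S s (fun u => γ (t + u)))
    (hlsc : ∀ T : ℝ, 0 ≤ T → ∀ (γn : ℕ → ℝ → EuclideanSpace ℝ (Fin d))
      (γ : ℝ → EuclideanSpace ℝ (Fin d)),
      TendstoUniformlyOn γn γ Filter.atTop (Set.Icc 0 T) →
      S T γ ≤ Filter.liminf (fun n => S T (γn n)) Filter.atTop)
    (hzero : ∀ T : ℝ, 0 ≤ T → ∀ γ : ℝ → EuclideanSpace ℝ (Fin d),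
      LipschitzOnWith K γ (Set.Icc 0 T) →
      (S T γ = 0 ↔ ∀ s ∈ Set.Icc (0:ℝ) T, γ s = Φ s (γ 0))) :
    ∃ a T : ℝ, 0 < a ∧ 0 < T ∧ ∀ t : ℝ, 0 ≤ t →
      ∀ γ : ℝ → EuclideanSpace ℝ (Fin d), LipschitzOnWith K γ (Set.Icc 0 t) →
        (∀ s ∈ Set.Icc (0:ℝ) t, γ s ∈ G) →
        ENNReal.ofReal a * (⌊t / T⌋₊ : ℝ≥0∞) ≤ S t γ :=
  stmt_14_general K Φ hΦc G hGc hesc S hadd hlsc hzero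
end

section
/- (Almost-sure averaging from exponential bounds via derivative control.) Suppose for each ε ∈ (0,1] and each δ > 0 there is α(δ) > 0 such that P{ max_{0≤n≤T/ε} |X^ε(n) − x| ≥ δ } ≤ e^{−α(δ)/ε} for all small ε, and suppose the derivative bound |dX^ε(n)/dε| ≤ n ε^{-1} (1+Cε)^n holds for all n and ε, with C > 0. Then with probability one, max_{0≤n≤T/ε} |X^ε(n) − x| → 0 as ε → 0. -/
open MeasureTheory Filter Set

private noncomputable def eps (k : ℕ) : ℝ := (Real.sqrt (k+1))⁻¹

private lemma sqp (k : ℕ) : (0:ℝ) < Real.sqrt (k+1) := Real.sqrt_pos.2 (by positivity)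

private lemma sq1 (k : ℕ) : (1:ℝ) ≤ Real.sqrt (k+1) := by
  have h := Real.sq_sqrt (show (0:ℝ) ≤ (k:ℝ)+1 by positivity)
  nlinarith [Real.sqrt_nonneg ((k:ℝ)+1), Nat.cast_nonneg (α := ℝ) k]

private lemma eps_pos (k : ℕ) : 0 < eps k := inv_pos.2 (sqp k)

private lemma eps_le_one (k : ℕ) : eps k ≤ 1 := by
  rw [eps, inv_le_one_iff₀]
  right; exact sq1 k

private lemma eps_anti : ∀ j k : ℕ, j ≤ k → eps k ≤ eps j := by
  intro j k h
  apply inv_anti₀ (sqp j)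
  apply Real.sqrt_le_sqrt
  have : (j:ℝ) ≤ k := by exact_mod_cast h
  linarith

private lemma eps_tendsto : Tendsto eps atTop (nhds 0) := by
  apply Filter.Tendsto.inv_tendsto_atTop
  rw [tendsto_atTop_atTop]
  intro b
  refine ⟨⌈b^2⌉₊, fun k hk => ?_⟩
  have h1 : b^2 ≤ (k:ℝ)+1 := by
    calc b^2 ≤ (⌈b^2⌉₊ : ℝ) := Nat.le_ceil _
    _ ≤ (k:ℝ) := by exact_mod_cast hk
    _ ≤ (k:ℝ)+1 := by linarith
  calc b ≤ |b| := le_abs_self b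
  _ = Real.sqrt (b^2) := (Real.sqrt_sq_eq_abs b).symm
  _ ≤ Real.sqrt (k+1) := Real.sqrt_le_sqrt h1

private lemma key_num' {a b T E : ℝ} (hT : 0 < T) (hE : 0 < E) (ha : 0 < a) (hab : a ≤ b)
    (h1 : b*b - a*b ≤ 1) : T * b * b * E * (a⁻¹ - b⁻¹) ≤ T * E * a⁻¹ := by
  have hb : 0 < b := ha.trans_le hab
  have e1 : a⁻¹ - b⁻¹ = (b - a) * (a*b)⁻¹ := by field_simp
  rw [e1]
  have e2 : T * b * b * E * ((b - a) * (a*b)⁻¹) = (T*E*(b*b - a*b)) * a⁻¹ := by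
    field_simp
  rw [e2]
  have h2 : T*E*(b*b-a*b) ≤ T*E*1 :=
    mul_le_mul_of_nonneg_left h1 (by positivity)
  calc (T*E*(b*b-a*b)) * a⁻¹ ≤ (T*E*1) * a⁻¹ :=
        mul_le_mul_of_nonneg_right h2 (by positivity)
    _ = T * E * a⁻¹ := by ring

private lemma summ {α : ℝ} (hα : 0 < α) :
    Summable (fun k : ℕ => Real.exp (-(α * Real.sqrt (k+1)))) := by
  have hg : Summable (fun k : ℕ => (120/α^5) * (1/((k:ℝ)+1)^2)) := by
    apply Summable.mul_left
    have h0 : Summable (fun k : ℕ => 1/((k:ℝ))^2) := Real.summable_one_div_nat_pow.2 one_lt_two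
    have := (summable_nat_add_iff 1).2 h0
    refine this.congr fun k => ?_
    push_cast; ring
  apply Summable.of_nonneg_of_le (fun k => (Real.exp_pos _).le) ?_ hg
  intro k
  set s := Real.sqrt (k+1) with hs
  have hs1 : (1:ℝ) ≤ s := sq1 k
  have hsq : s^2 = (k:ℝ)+1 := Real.sq_sqrt (by positivity)
  have h5 : α^5 * ((k:ℝ)+1)^2 / 120 ≤ Real.exp (α * s) := by
    calc α^5 * ((k:ℝ)+1)^2 / 120 ≤ (α*s)^5 / 120 := by
          rw [mul_pow]
          have e4 : ((k:ℝ)+1)^2 = s^4 := by rw [← hsq]; ring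
          have : ((k:ℝ)+1)^2 ≤ s^5 := by
            rw [e4]; exact pow_le_pow_right₀ hs1 (by norm_num)
          have := mul_le_mul_of_nonneg_left this (by positivity : (0:ℝ) ≤ α^5)
          linarith
      _ = (α*s)^5 / (Nat.factorial 5 : ℝ) := by norm_num [Nat.factorial]
      _ ≤ Real.exp (α*s) := Real.pow_div_factorial_le_exp _ (by positivity) 5
  rw [Real.exp_neg]
  rw [inv_le_comm₀ (Real.exp_pos _) (by positivity)]
  calc (120/α^5 * (1/((k:ℝ)+1)^2))⁻¹ = α^5 * ((k:ℝ)+1)^2/120 := by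
        rw [mul_inv]; field_simp
    _ ≤ Real.exp (α*s) := h5

set_option maxHeartbeats 2000000 in
/-- Almost-sure averaging from exponential bounds via derivative control: if
`P{max_{0≤n≤T/ε} |X^ε(n) - x| ≥ δ} ≤ e^{-α(δ)/ε}` for small `ε` and the derivative in
`ε` satisfies `|dX^ε(n)/dε| ≤ n ε⁻¹ (1+Cε)ⁿ`, then with probability one
`max_{0≤n≤T/ε} |X^ε(n) - x| → 0` as `ε → 0⁺`. -/
theorem stmt_16 {Ω : Type*} [MeasurableSpace Ω] (P : Measure Ω)
    [IsProbabilityMeasure P]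
    (T x C : ℝ) (hT : 0 < T) (hC : 0 < C)
    (X : ℝ → ℕ → Ω → ℝ)
    (hLD : ∀ δ : ℝ, 0 < δ → ∃ α : ℝ, 0 < α ∧ ∃ ε₀ : ℝ, 0 < ε₀ ∧
      ∀ ε : ℝ, 0 < ε → ε ≤ ε₀ →
        P {ω | ∃ n : ℕ, (n : ℝ) ≤ T / ε ∧ δ ≤ |X ε n ω - x|}
          ≤ ENNReal.ofReal (Real.exp (-α / ε)))
    (hderiv : ∀ (ω : Ω) (n : ℕ) (ε : ℝ), 0 < ε → ε ≤ 1 →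
      ∃ dX : ℝ, HasDerivAt (fun e => X e n ω) dX ε ∧
        |dX| ≤ (n : ℝ) * ε⁻¹ * (1 + C * ε) ^ n) :
    ∀ᵐ ω ∂P, Tendsto (fun ε : ℝ => ⨆ n ∈ {n : ℕ | (n : ℝ) ≤ T / ε}, |X ε n ω - x|)
      (nhdsWithin 0 (Set.Ioi 0)) (nhds 0) := by
  classical
  set E := Real.exp (2*C*T) with hE
  have hEpos : 0 < E := Real.exp_pos _
  have key : ∀ δ : ℝ, 0 < δ → ∀ᵐ ω ∂P, ∀ᶠ ε in nhdsWithin 0 (Set.Ioi 0),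
      (⨆ n ∈ {n : ℕ | (n:ℝ) ≤ T/ε}, |X ε n ω - x|) < δ := by
    intro δ hδ
    obtain ⟨α, hα, ε₀, hε₀, hP⟩ := hLD (δ/2) (by positivity)
    obtain ⟨K₀, hK₀⟩ := eventually_atTop.1 (eps_tendsto.eventually_lt_const hε₀)
    set s : ℕ → Set Ω := fun k =>
      {ω | ∃ n : ℕ, (n:ℝ) ≤ T / eps (k+K₀) ∧ δ/2 ≤ |X (eps (k+K₀)) n ω - x|} with hsdef
    have hsum : ∑' k, P (s k) ≠ ⊤ := by
      have hfin : ∑' k, P (s k) < ⊤ := by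
        have hle : ∀ k : ℕ, P (s k) ≤ ENNReal.ofReal (Real.exp (-(α * Real.sqrt ((k:ℝ)+1)))) := by
          intro k
          refine le_trans (hP (eps (k+K₀)) (eps_pos _) (hK₀ (k+K₀) (Nat.le_add_left _ _)).le) ?_
          apply ENNReal.ofReal_le_ofReal
          apply Real.exp_le_exp.2
          rw [eps, div_eq_mul_inv, inv_inv]
          have hmono : Real.sqrt ((k:ℝ)+1) ≤ Real.sqrt (((k+K₀:ℕ):ℝ)+1) :=
            Real.sqrt_le_sqrt (by push_cast; linarith [Nat.cast_nonneg (α := ℝ) K₀])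
          nlinarith [hmono, hα]
        calc ∑' k, P (s k) ≤ ∑' k : ℕ, ENNReal.ofReal (Real.exp (-(α * Real.sqrt ((k:ℝ)+1)))) :=
              ENNReal.tsum_le_tsum hle
          _ = ENNReal.ofReal (∑' k : ℕ, Real.exp (-(α * Real.sqrt ((k:ℝ)+1)))) :=
              (ENNReal.ofReal_tsum_of_nonneg (fun _ => (Real.exp_pos _).le) (summ hα)).symm
          _ < ⊤ := ENNReal.ofReal_lt_top
      exact hfin.ne
    have hBC : P {ω | ∃ᶠ k in atTop, ω ∈ s k} = 0 :=
      measure_setOf_frequently_eq_zero hsum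
    have hae : ∀ᵐ ω ∂P, ∀ᶠ k in atTop, ω ∉ s k := by
      have : {ω | ¬ ∀ᶠ k in atTop, ω ∉ s k} = {ω | ∃ᶠ k in atTop, ω ∈ s k} := by
        ext ω; simp [Filter.not_eventually, Filter.frequently_atTop]
      rw [ae_iff, this]; exact hBC
    filter_upwards [hae] with ω hω
    obtain ⟨K₁, hK₁⟩ := eventually_atTop.1 hω
    obtain ⟨N, hN⟩ := exists_nat_gt ((2*T*E/δ)^2)
    set K := max (K₁ + K₀) N with hK
    filter_upwards [Ioc_mem_nhdsGT_of_mem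
      (⟨le_refl (0:ℝ), eps_pos (K+1)⟩ : (0:ℝ) ∈ Set.Ico (0:ℝ) (eps (K+1)))] with ε hε
    obtain ⟨hε1, hε2⟩ := hε
    have hex : ∃ j, eps j < ε := (eps_tendsto.eventually_lt_const hε1).exists
    set j := Nat.find hex with hjdef
    have hjlt : eps j < ε := Nat.find_spec hex
    have hjge : ∀ i, i < j → ε ≤ eps i := fun i hi => not_lt.1 (Nat.find_min hex hi)
    clear_value j
    have hjK : K + 1 < j := by
      by_contra hcon
      push_neg at hcon
      have := eps_anti j (K+1) hcon
      linarith
    set k := j - 1 with hkdef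
    have hjk : j = k + 1 := by omega
    have hkK : K < k := by omega
    clear_value k
    have hεk : ε ≤ eps k := hjge k (by omega)
    -- basic quantities
    set a1 := Real.sqrt ((k:ℝ)+1) with ha1def
    set b1 := Real.sqrt ((k:ℝ)+2) with hb1def
    have ha1 : 0 < a1 := sqp k
    have hsqa : a1^2 = (k:ℝ)+1 := Real.sq_sqrt (by positivity)
    have hsqb : b1^2 = (k:ℝ)+2 := Real.sq_sqrt (by positivity)
    have hab1 : a1 ≤ b1 := Real.sqrt_le_sqrt (by linarith)
    have hb1 : 0 < b1 := ha1.trans_le hab1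
    have hb2a : b1 ≤ 2*a1 := by
      nlinarith [hsqa, hsqb, ha1, hb1]
    have hcast : ((j:ℝ)) + 1 = (k:ℝ)+2 := by
      rw [hjk]; push_cast; ring
    have hepsj : eps j = b1⁻¹ := by
      rw [eps, hb1def, hcast]
    have hepsk : eps k = a1⁻¹ := by rw [eps]
    have haj : 0 < eps j := eps_pos j
    -- bound for each n
    have hbound : ∀ n : ℕ, (n:ℝ) ≤ T/ε → |X ε n ω - x| ≤ δ/2 + T*E*a1⁻¹ := by
      intro n hn
      have hnj : (n:ℝ) ≤ T / eps j := by
        refine hn.trans ?_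
        gcongr
      -- base control at eps j
      have hjK0 : K₁ ≤ j - K₀ ∧ (j - K₀) + K₀ = j := by
        constructor <;> omega
      have hbase0 := hK₁ (j - K₀) hjK0.1
      rw [hsdef] at hbase0
      simp only [hjK0.2, Set.mem_setOf_eq] at hbase0
      push_neg at hbase0
      have hbase : |X (eps j) n ω - x| < δ/2 := hbase0 n hnj
      -- MVT bound
      set M := (T * b1) * b1 * E with hM
      have hMpos : 0 ≤ M := by positivity
      have hnb : (n:ℝ) ≤ T * b1 := by
        rwa [hepsj, div_eq_mul_inv, inv_inv] at hnj
      have hMVT : |X ε n ω - X (eps j) n ω| ≤ M * (ε - eps j) := by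
        have := norm_image_sub_le_of_norm_deriv_le_segment'
          (f := fun e => X e n ω) (f' := fun e => deriv (fun e' => X e' n ω) e)
          (a := eps j) (b := ε) (C := M) ?_ ?_ ε (right_mem_Icc.2 hjlt.le)
        · simpa [Real.norm_eq_abs] using this
        · intro e he
          have he0 : 0 < e := lt_of_lt_of_le haj he.1
          have he1 : e ≤ 1 := he.2.trans (hε2.trans (eps_le_one (K+1)))
          obtain ⟨d, hd, _⟩ := hderiv ω n e he0 he1
          have hdd : deriv (fun e' => X e' n ω) e = d := hd.deriv
          show HasDerivWithinAt (fun e' => X e' n ω) (deriv (fun e' => X e' n ω) e)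
            (Set.Icc (eps j) ε) e
          rw [hdd]
          exact hd.hasDerivWithinAt
        · intro e he
          have he0 : 0 < e := lt_of_lt_of_le haj he.1
          have heε : e ≤ ε := he.2.le
          have he1 : e ≤ 1 := heε.trans (hε2.trans (eps_le_one (K+1)))
          obtain ⟨d, hd, hdb⟩ := hderiv ω n e he0 he1
          have hdd : deriv (fun e' => X e' n ω) e = d := hd.deriv
          show ‖deriv (fun e' => X e' n ω) e‖ ≤ M
          rw [Real.norm_eq_abs, hdd]
          refine hdb.trans ?_
          have hinv : e⁻¹ ≤ b1 := by
            rw [← inv_inv b1]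
            apply inv_anti₀ (inv_pos.2 hb1)
            rw [← hepsj]
            exact he.1
          have hek : e ≤ a1⁻¹ := heε.trans (hεk.trans_eq hepsk)
          have hpow : (1 + C*e)^n ≤ E := by
            have h1 : 1 + C*e ≤ Real.exp (C*e) := by
              have := Real.add_one_le_exp (C*e); linarith
            have h2 : (1+C*e)^n ≤ Real.exp (C*e)^n :=
              pow_le_pow_left₀ (by positivity) h1 n
            have h3 : Real.exp (C*e)^n = Real.exp ((n:ℝ)*(C*e)) := (Real.exp_nat_mul _ n).symm
            have hb1a : b1 * a1⁻¹ ≤ 2 := by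
              have h5 := mul_le_mul_of_nonneg_right hb2a (inv_nonneg.2 ha1.le)
              rw [mul_assoc, mul_inv_cancel₀ (ne_of_gt ha1), mul_one] at h5
              exact h5
            have h4 : (n:ℝ)*(C*e) ≤ 2*C*T := by
              have h6 : (n:ℝ)*(C*e) ≤ (T*b1)*(C*a1⁻¹) := by
                apply mul_le_mul hnb ?_ (by positivity) (by positivity)
                exact mul_le_mul_of_nonneg_left hek hC.le
              have h7 : (T*b1)*(C*a1⁻¹) = C*T*(b1*a1⁻¹) := by ring
              have h8 : C*T*(b1*a1⁻¹) ≤ C*T*2 :=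
                mul_le_mul_of_nonneg_left hb1a (by positivity)
              linarith
            calc (1+C*e)^n ≤ Real.exp (C*e)^n := h2
              _ = Real.exp ((n:ℝ)*(C*e)) := h3
              _ ≤ Real.exp (2*C*T) := Real.exp_le_exp.2 h4
              _ = E := hE.symm
          calc (n:ℝ) * e⁻¹ * (1+C*e)^n ≤ ((T*b1) * b1) * E := by
                apply mul_le_mul ?_ hpow (by positivity) (by positivity)
                exact mul_le_mul hnb hinv (by positivity) (by positivity)
            _ = M := by rw [hM]
      have hnum : M * (ε - eps j) ≤ T*E*a1⁻¹ := by
        have hstep : M * (ε - eps j) ≤ M * (a1⁻¹ - b1⁻¹) := by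
          apply mul_le_mul_of_nonneg_left ?_ hMpos
          rw [hepsj]
          have : ε ≤ a1⁻¹ := hεk.trans_eq hepsk
          linarith
        refine hstep.trans ?_
        have h1 : b1*b1 - a1*b1 ≤ 1 := by nlinarith [mul_le_mul_of_nonneg_left hab1 ha1.le, hsqa, hsqb]
        have h2 := key_num' hT hEpos ha1 hab1 h1
        have h3 : M * (a1⁻¹ - b1⁻¹) = T * b1 * b1 * E * (a1⁻¹ - b1⁻¹) := by
          rw [hM]; try ring
        linarith
      calc |X ε n ω - x| ≤ |X (eps j) n ω - x| + |X ε n ω - X (eps j) n ω| := by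
            have he : X ε n ω - x = (X (eps j) n ω - x) + (X ε n ω - X (eps j) n ω) := by ring
            rw [he]; exact abs_add_le _ _
        _ ≤ δ/2 + T*E*a1⁻¹ := by linarith [hMVT, hnum]
    -- a1 is large enough
    have hlt : 2*T*E/δ < a1 := by
      have hNk : (N:ℝ) ≤ (k:ℝ) := by
        exact_mod_cast (le_of_lt (lt_of_le_of_lt (le_max_right (K₁+K₀) N) hkK))
      have h1 : ((2*T*E/δ)^2) < ((k:ℝ)+1) := by linarith [hN]
      nlinarith [Real.sqrt_nonneg ((k:ℝ)+1), hsqa,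
        div_nonneg (by positivity : (0:ℝ) ≤ 2*T*E) hδ.le]
    have hfinal : T*E*a1⁻¹ < δ/2 := by
      have h3 : 2*T*E < a1 * δ := by rwa [div_lt_iff₀ hδ] at hlt
      have h4 : (2*T*E)*a1⁻¹ < (a1*δ)*a1⁻¹ :=
        mul_lt_mul_of_pos_right h3 (inv_pos.2 ha1)
      have h5 : (a1*δ)*a1⁻¹ = δ := by field_simp
      linarith
    have hB0 : 0 ≤ δ/2 + T*E*a1⁻¹ := by positivity
    have hsup : (⨆ n : ℕ, ⨆ _ : (n:ℝ) ≤ T/ε, |X ε n ω - x|) ≤ δ/2 + T*E*a1⁻¹ :=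
      Real.iSup_le (fun n => Real.iSup_le (fun hn => hbound n hn) hB0) hB0
    exact lt_of_le_of_lt hsup (by linarith)
  have hall := ae_all_iff.2 (fun m : ℕ => key (1/((m:ℝ)+1)) (by positivity))
  filter_upwards [hall] with ω hω
  have hnn : ∀ ε : ℝ, 0 ≤ ⨆ n : ℕ, ⨆ _ : (n:ℝ) ≤ T/ε, |X ε n ω - x| :=
    fun ε => Real.iSup_nonneg fun n => Real.iSup_nonneg fun _ => abs_nonneg _
  rw [Metric.tendsto_nhds]
  intro r hr
  obtain ⟨m, hm⟩ := exists_nat_one_div_lt hr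
  filter_upwards [hω m] with ε hε
  rw [Real.dist_eq, sub_zero, abs_of_nonneg (hnn ε)]
  exact hε.trans hm
end
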